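/- Let (Y_{ij})_{1≤i<j} be the Gaussian field with pairwise correlation ρ ∈ [0,1/2] and let p = p_n → ∞. Then max_{1≤i<j≤p} Y_{ij}/√(log p) converges to 2 in probability as n → ∞. -/

import Mathlib

open MeasureTheory ProbabilityTheory Filter Asymptotics Topology Real
open scoped ENNReal NNReal

noncomputable section

namespace GaussianField

variable {Ω : Type*} [MeasurableSpace Ω]

/-- `p̃ = p(p-1)/2`. -/
def ptilde (p : ℕ) : ℝ := (p : ℝ) * ((p : ℝ) - 1) / 2

/-- The normalizing sequence `d_{n,1}`. -/
def dn1 (p : ℕ) : ℝ :=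
  Real.sqrt (2 * Real.log (ptilde p)) -
    (Real.log (Real.log (ptilde p)) + Real.log (4 * Real.pi)) /
      (2 * Real.sqrt (2 * Real.log (ptilde p)))

def Yfield (ρ : ℝ) (W : (ℕ × ℕ) ⊕ (ℕ ⊕ ℕ) → Ω → ℝ) (i j : ℕ) (ω : Ω) : ℝ :=
  Real.sqrt (1 - 2 * ρ) * W (Sum.inl (i, j)) ω +
    Real.sqrt ρ * (W (Sum.inr (Sum.inl i)) ω + W (Sum.inr (Sum.inr j)) ω)

structure IIDStdGaussian (μ : Measure Ω) (W : (ℕ × ℕ) ⊕ (ℕ ⊕ ℕ) → Ω → ℝ) : Prop where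
  meas : ∀ k, Measurable (W k)
  indep : iIndepFun W μ
  gauss : ∀ k, Measure.map (W k) μ = gaussianReal 0 1

lemma exp_mul_gaussianPDFReal (c x : ℝ) :
    rexp (c * x) * gaussianPDFReal 0 1 x = rexp (c ^ 2 / 2) * gaussianPDFReal c 1 x := by
  simp only [gaussianPDFReal, NNReal.coe_one, mul_one, sub_zero]
  rw [mul_left_comm, mul_left_comm (rexp (c ^ 2 / 2)), ← Real.exp_add, ← Real.exp_add]
  ring_nf

lemma integrable_exp_mul_gaussian (c : ℝ) :
    Integrable (fun x => rexp (c * x)) (gaussianReal 0 1) := by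
  rw [gaussianReal_of_var_ne_zero _ one_ne_zero]
  rw [integrable_withDensity_iff (measurable_gaussianPDF 0 1) (ae_of_all _ fun x => ?_)]
  · have : (fun x => rexp (c * x) * (gaussianPDF 0 1 x).toReal)
        = fun x => rexp (c ^ 2 / 2) * gaussianPDFReal c 1 x := by
      ext x
      rw [gaussianPDF, ENNReal.toReal_ofReal (gaussianPDFReal_nonneg _ _ _)]
      exact exp_mul_gaussianPDFReal c x
    rw [this]
    exact (integrable_gaussianPDFReal c 1).const_mul _
  · exact ENNReal.ofReal_lt_top

lemma integral_exp_mul_gaussian (c : ℝ) :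
    ∫ x, rexp (c * x) ∂(gaussianReal 0 1) = rexp (c ^ 2 / 2) := by
  have hrw : gaussianReal 0 1
      = volume.withDensity (fun x => ((gaussianPDFReal 0 1 x).toNNReal : ℝ≥0∞)) := by
    rw [gaussianReal_of_var_ne_zero _ one_ne_zero]; rfl
  rw [hrw, integral_withDensity_eq_integral_smul
    (by exact (measurable_gaussianPDFReal 0 1).real_toNNReal)]
  have : (fun x => ((gaussianPDFReal 0 1 x).toNNReal : ℝ≥0) • rexp (c * x))
      = fun x => rexp (c ^ 2 / 2) * gaussianPDFReal c 1 x := by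
    ext x
    rw [NNReal.smul_def, smul_eq_mul, Real.coe_toNNReal _ (gaussianPDFReal_nonneg _ _ _), mul_comm]
    exact exp_mul_gaussianPDFReal c x
  rw [this, integral_const_mul, integral_gaussianPDFReal_eq_one c one_ne_zero, mul_one]

variable {μ : Measure Ω}

section Maps

variable {X : Ω → ℝ} (hXm : Measurable X) (hX : Measure.map X μ = gaussianReal 0 1)

include hXm hX

lemma integrable_exp_mul_of_gaussian (c : ℝ) :
    Integrable (fun ω => rexp (c * X ω)) μ := by
  have h := integrable_exp_mul_gaussian c
  rw [← hX] at h
  exact (integrable_map_measure (Measurable.aestronglyMeasurable (by fun_prop))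
    hXm.aemeasurable).mp h

lemma mgf_of_gaussian (c : ℝ) : mgf X μ c = rexp (c ^ 2 / 2) := by
  rw [mgf, ← integral_exp_mul_gaussian c, ← hX,
    integral_map hXm.aemeasurable (Measurable.aestronglyMeasurable (by fun_prop))]

lemma tail_eq_of_gaussian (t : ℝ) :
    μ {ω | t ≤ X ω} = gaussianReal 0 1 {x | t ≤ x} := by
  have : {x : ℝ | t ≤ x} = Set.Ici t := rfl
  rw [this, ← hX, Measure.map_apply hXm measurableSet_Ici]
  rfl

end Maps

/-- Lower bound on the standard Gaussian upper tail. -/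
lemma gaussian_tail_lower {t : ℝ} (ht : 0 ≤ t) :
    ENNReal.ofReal ((Real.sqrt (2 * π))⁻¹ * rexp (-(t + 1) ^ 2 / 2))
      ≤ gaussianReal 0 1 {x | t ≤ x} := by
  have hsub : Set.Icc t (t + 1) ⊆ {x | t ≤ x} := fun x hx => hx.1
  refine le_trans ?_ (measure_mono hsub)
  rw [gaussianReal_apply _ one_ne_zero]
  have hpdf : ∀ x ∈ Set.Icc t (t + 1),
      ENNReal.ofReal ((Real.sqrt (2 * π))⁻¹ * rexp (-(t + 1) ^ 2 / 2)) ≤ gaussianPDF 0 1 x := by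
    intro x hx
    rw [gaussianPDF]
    apply ENNReal.ofReal_le_ofReal
    simp only [gaussianPDFReal, NNReal.coe_one, mul_one, sub_zero]
    refine mul_le_mul_of_nonneg_left ?_ (by positivity)
    exact Real.exp_le_exp.mpr (by nlinarith [hx.1, hx.2, ht])
  calc ENNReal.ofReal ((Real.sqrt (2 * π))⁻¹ * rexp (-(t + 1) ^ 2 / 2))
      = ENNReal.ofReal ((Real.sqrt (2 * π))⁻¹ * rexp (-(t + 1) ^ 2 / 2)) * volume (Set.Icc t (t+1)) := by
        rw [Real.volume_Icc]; simp
    _ = ∫⁻ _ in Set.Icc t (t + 1), ENNReal.ofReal ((Real.sqrt (2 * π))⁻¹ * rexp (-(t + 1) ^ 2 / 2)) := by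
        rw [setLIntegral_const, Real.volume_Icc]
    _ ≤ ∫⁻ x in Set.Icc t (t + 1), gaussianPDF 0 1 x := by
        apply setLIntegral_mono (measurable_gaussianPDF 0 1) hpdf

lemma mgf_const_mul {X : Ω → ℝ} (a u : ℝ) :
    mgf (fun ω => a * X ω) μ u = mgf X μ (u * a) := by
  unfold mgf
  congr 1 with ω
  simp [mul_assoc]

variable {W : (ℕ × ℕ) ⊕ (ℕ ⊕ ℕ) → Ω → ℝ} [IsProbabilityMeasure μ]

/-- Chernoff upper tail for the field. -/
lemma Yfield_tail (hW : IIDStdGaussian μ W) {ρ : ℝ} (hρ : ρ ∈ Set.Icc (0:ℝ) (1/2))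
    (i j : ℕ) {u : ℝ} (hu : 0 ≤ u) :
    μ {ω | u ≤ Yfield ρ W i j ω} ≤ ENNReal.ofReal (rexp (-(u ^ 2) / 2)) := by
  classical
  obtain ⟨hρ0, hρ2⟩ := hρ
  set b := Real.sqrt (1 - 2 * ρ) with hb
  set c := Real.sqrt ρ with hc
  set k1 : (ℕ × ℕ) ⊕ (ℕ ⊕ ℕ) := Sum.inl (i, j) with hk1
  set k2 : (ℕ × ℕ) ⊕ (ℕ ⊕ ℕ) := Sum.inr (Sum.inl i) with hk2
  set k3 : (ℕ × ℕ) ⊕ (ℕ ⊕ ℕ) := Sum.inr (Sum.inr j) with hk3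
  set s : (ℕ × ℕ) ⊕ (ℕ ⊕ ℕ) → ℝ := Sum.elim (fun _ => b) (Sum.elim (fun _ => c) (fun _ => c))
    with hs
  set f : (ℕ × ℕ) ⊕ (ℕ ⊕ ℕ) → Ω → ℝ := fun k ω => s k * W k ω with hf
  have hfmeas : ∀ k, Measurable (f k) := fun k => (hW.meas k).const_mul _
  have hfind : iIndepFun f μ :=
    hW.indep.comp (fun k x => s k * x) (fun k => measurable_id.const_mul _)
  have h12 : k1 ≠ k2 := by simp [hk1, hk2]
  have h13 : k1 ≠ k3 := by simp [hk1, hk3]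
  have h23 : k2 ≠ k3 := by simp [hk2, hk3]
  have hYeq : Yfield ρ W i j = fun ω => f k1 ω + (f k2 ω + f k3 ω) := by
    ext ω
    simp only [Yfield, hf, hs, hk1, hk2, hk3, Sum.elim_inl, Sum.elim_inr]
    ring
  -- mgf of each piece
  have hmgf : ∀ k, mgf (f k) μ u = rexp ((u * s k) ^ 2 / 2) := by
    intro k
    rw [hf, mgf_const_mul, mgf_of_gaussian (hW.meas k) (hW.gauss k)]
  -- integrability of exp (u * f k)
  have hint : ∀ k, Integrable (fun ω => rexp (u * f k ω)) μ := by
    intro k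
    have := integrable_exp_mul_of_gaussian (hW.meas k) (hW.gauss k) (u * s k)
    refine this.congr ?_
    filter_upwards with ω
    rw [hf, mul_assoc]
  -- the exponential family
  set g : (ℕ × ℕ) ⊕ (ℕ ⊕ ℕ) → Ω → ℝ := fun k ω => rexp (u * f k ω) with hg
  have hgind : iIndepFun g μ :=
    hfind.comp (fun k x => rexp (u * x)) (fun k => (measurable_id.const_mul _).exp)
  have hgmeas : ∀ k, Measurable (g k) := fun k => ((hfmeas k).const_mul _).exp
  have hI23 : Integrable (g k2 * g k3) μ :=
    ((hgind.indepFun h23).integrable_mul (hint k2) (hint k3))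
  have hI123 : Integrable (g k1 * (g k2 * g k3)) μ :=
    ((hgind.indepFun_mul_right hgmeas k1 k2 k3 h12 h13).integrable_mul (hint k1) hI23)
  have hintY : Integrable (fun ω => rexp (u * Yfield ρ W i j ω)) μ := by
    refine hI123.congr ?_
    filter_upwards with ω
    rw [hYeq]
    simp only [Pi.mul_apply, hg]
    rw [← Real.exp_add, ← Real.exp_add]
    ring_nf
  -- mgf of Y
  have hsum : Yfield ρ W i j = ∑ k ∈ ({k1, k2, k3} : Finset _), f k := by
    rw [hYeq]
    ext ω
    rw [Finset.sum_insert (by simp [h12, h13]), Finset.sum_pair h23]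
    simp
  have hmgfY : mgf (Yfield ρ W i j) μ u = rexp (u ^ 2 / 2) := by
    rw [hsum, hfind.mgf_sum hfmeas]
    rw [Finset.prod_insert (by simp [h12, h13]), Finset.prod_pair h23]
    rw [hmgf k1, hmgf k2, hmgf k3, ← Real.exp_add, ← Real.exp_add]
    congr 1
    have hbsq : b ^ 2 = 1 - 2 * ρ := Real.sq_sqrt (by linarith)
    have hcsq : c ^ 2 = ρ := Real.sq_sqrt hρ0
    have : s k1 = b := rfl
    have h2 : s k2 = c := rfl
    have h3 : s k3 = c := rfl
    rw [this, h2, h3]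
    nlinarith [hbsq, hcsq]
  have hchern := measure_ge_le_exp_mul_mgf (μ := μ) (X := Yfield ρ W i j) u hu hintY
  rw [hmgfY, ← Real.exp_add] at hchern
  have heq : -u * u + u ^ 2 / 2 = -(u ^ 2) / 2 := by ring
  rw [heq] at hchern
  exact (ENNReal.le_ofReal_iff_toReal_le (measure_ne_top μ _) (Real.exp_nonneg _)).mpr hchern


/-- real tail of the standard gaussian -/
def qR (t : ℝ) : ℝ := (gaussianReal 0 1 {x | t ≤ x}).toReal

lemma qR_nonneg (t : ℝ) : 0 ≤ qR t := ENNReal.toReal_nonneg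

lemma qR_le_one (t : ℝ) : qR t ≤ 1 := by
  rw [qR]
  have h := prob_le_one (μ := gaussianReal 0 1) (s := {x | t ≤ x})
  exact ENNReal.toReal_le_of_le_ofReal one_pos.le (by simpa using h)

lemma qR_lower {t : ℝ} (ht : 0 ≤ t) :
    (Real.sqrt (2 * π))⁻¹ * rexp (-(t + 1) ^ 2 / 2) ≤ qR t := by
  have h := gaussian_tail_lower ht
  rw [qR]
  have h2 : (ENNReal.ofReal ((Real.sqrt (2 * π))⁻¹ * rexp (-(t + 1) ^ 2 / 2))).toReal
      ≤ (gaussianReal 0 1 {x | t ≤ x}).toReal := by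
    apply ENNReal.toReal_mono (measure_ne_top _ _) h
  rwa [ENNReal.toReal_ofReal (by positivity)] at h2

variable {W : (ℕ × ℕ) ⊕ (ℕ ⊕ ℕ) → Ω → ℝ} [IsProbabilityMeasure μ]

lemma tail_toReal (hW : IIDStdGaussian μ W) (k : (ℕ × ℕ) ⊕ (ℕ ⊕ ℕ)) (t : ℝ) :
    μ {ω | t ≤ W k ω} = ENNReal.ofReal (qR t) := by
  rw [tail_eq_of_gaussian (hW.meas k) (hW.gauss k), qR,
    ENNReal.ofReal_toReal (measure_ne_top _ _)]

lemma measure_lt_le (hW : IIDStdGaussian μ W) (k : (ℕ × ℕ) ⊕ (ℕ ⊕ ℕ)) (t : ℝ) :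
    μ {ω | W k ω < t} ≤ ENNReal.ofReal (rexp (-(qR t))) := by
  have hc : {ω | W k ω < t} = {ω | t ≤ W k ω}ᶜ := by
    ext ω; simp [not_le]
  rw [hc, measure_compl (by
    have : {ω | t ≤ W k ω} = W k ⁻¹' Set.Ici t := rfl
    rw [this]; exact (hW.meas k) measurableSet_Ici) (measure_ne_top _ _)]
  rw [measure_univ, tail_toReal hW k t]
  have h1 : (1 : ℝ≥0∞) - ENNReal.ofReal (qR t) = ENNReal.ofReal (1 - qR t) := by
    rw [← ENNReal.ofReal_one, ← ENNReal.ofReal_sub _ (qR_nonneg t)]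
  rw [h1]
  exact ENNReal.ofReal_le_ofReal (by linarith [Real.add_one_le_exp (-(qR t)), qR_nonneg t])

/-- Chebyshev bound for the number of exceedances along an injectively indexed subfamily. -/
lemma count_chebyshev (hW : IIDStdGaussian μ W) {e : ℕ → (ℕ × ℕ) ⊕ (ℕ ⊕ ℕ)}
    (he : Function.Injective e) (t : ℝ) (S : Finset ℕ) (hq : 0 < qR t) (hS : 0 < S.card) :
    μ {ω | (((S.filter (fun i => t ≤ W (e i) ω)).card : ℝ) < S.card * qR t / 2)}
      ≤ ENNReal.ofReal (4 / (S.card * qR t)) := by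
  classical
  set q := qR t with hqdef
  set ind : ℕ → Ω → ℝ := fun i ω => if t ≤ W (e i) ω then (1:ℝ) else 0 with hind
  have hindeq : ∀ i, ind i = (W (e i) ⁻¹' Set.Ici t).indicator (fun _ => (1:ℝ)) := by
    intro i; ext ω
    simp only [hind, Set.indicator, Set.mem_preimage, Set.mem_Ici]
  have hmeasIci : ∀ i, MeasurableSet (W (e i) ⁻¹' Set.Ici t) :=
    fun i => (hW.meas (e i)) measurableSet_Ici
  have hindmeas : ∀ i, Measurable (ind i) := by
    intro i; rw [hindeq i]
    exact (measurable_const.indicator (hmeasIci i))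
  have hmemLp : ∀ i, MemLp (ind i) 2 μ := by
    intro i
    refine MemLp.of_bound ((hindmeas i).aestronglyMeasurable) 1 ?_
    filter_upwards with ω
    simp only [hind]
    split <;> simp
  have hEind : ∀ i, μ[ind i] = q := by
    intro i
    rw [hindeq i, integral_indicator_const (1:ℝ) (hmeasIci i), smul_eq_mul, mul_one]
    have : W (e i) ⁻¹' Set.Ici t = {ω | t ≤ W (e i) ω} := rfl
    rw [this, measureReal_def, tail_toReal hW (e i) t, ENNReal.toReal_ofReal (qR_nonneg t)]
  have hVarind : ∀ i, variance (ind i) μ ≤ q := by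
    intro i
    rw [variance_eq_sub (hmemLp i)]
    have hsq : (ind i) ^ 2 = ind i := by
      ext ω; simp only [Pi.pow_apply, hind]; split <;> simp
    rw [hsq, hEind i]
    nlinarith [sq_nonneg (μ[ind i]), hEind i, qR_nonneg t]
  set A : Ω → ℝ := fun ω => ∑ i ∈ S, ind i ω with hA
  have hAsum : (∑ i ∈ S, ind i) = A := by ext ω; simp [hA]
  have hpairwise : Set.Pairwise ↑S fun i j => IndepFun (ind i) (ind j) μ := by
    intro i _ j _ hij
    have h0 : IndepFun (W (e i)) (W (e j)) μ := hW.indep.indepFun (he.ne hij)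
    have hm : Measurable (fun x : ℝ => if t ≤ x then (1:ℝ) else 0) := by
      exact Measurable.ite measurableSet_Ici measurable_const measurable_const
    exact h0.comp hm hm
  have hEA : μ[A] = S.card * q := by
    rw [hA, integral_finset_sum _ (fun i _ => ((hmemLp i).integrable one_le_two))]
    rw [Finset.sum_congr rfl (fun i _ => hEind i), Finset.sum_const, nsmul_eq_mul]
  have hVarA : variance A μ ≤ S.card * q := by
    rw [← hAsum, IndepFun.variance_sum (fun i _ => hmemLp i) hpairwise]
    calc ∑ i ∈ S, variance (ind i) μ ≤ ∑ _i ∈ S, q := Finset.sum_le_sum (fun i _ => hVarind i)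
      _ = S.card * q := by rw [Finset.sum_const, nsmul_eq_mul]
  have hALp : MemLp A 2 μ := by rw [← hAsum]; exact memLp_finset_sum' _ (fun i _ => hmemLp i)
  have hc : (0:ℝ) < S.card * q / 2 := by positivity
  have hcheb := meas_ge_le_variance_div_sq (μ := μ) hALp hc
  have hsub : {ω | ((S.filter (fun i => t ≤ W (e i) ω)).card : ℝ) < S.card * q / 2}
      ⊆ {ω | S.card * q / 2 ≤ |A ω - μ[A]|} := by
    intro ω hω
    simp only [Set.mem_setOf_eq] at hω ⊢
    have hAcount : A ω = ((S.filter (fun i => t ≤ W (e i) ω)).card : ℝ) := by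
      rw [hA]
      simp only [hind]
      rw [Finset.sum_boole]
    rw [hEA, hAcount]
    rw [abs_sub_comm, abs_of_nonneg (by nlinarith)]
    nlinarith
  refine le_trans (measure_mono hsub) (le_trans hcheb (ENNReal.ofReal_le_ofReal ?_))
  rw [div_le_div_iff₀ (by positivity) (by positivity)]
  have hcard : (0:ℝ) < S.card := by exact_mod_cast hS
  nlinarith [hVarA, hcard, hq]

def e1 (i : ℕ) : (ℕ × ℕ) ⊕ (ℕ ⊕ ℕ) := Sum.inr (Sum.inl i)
def e2 (j : ℕ) : (ℕ × ℕ) ⊕ (ℕ ⊕ ℕ) := Sum.inr (Sum.inr j)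

lemma e1_inj : Function.Injective e1 := fun a b h => by simpa [e1] using h
lemma e2_inj : Function.Injective e2 := fun a b h => by simpa [e2] using h

lemma filter_eq_iff' {S s : Finset ℕ} (hs : s ⊆ S) (P : ℕ → Prop) [DecidablePred P] :
    S.filter P = s ↔ ∀ i ∈ S, (P i ↔ i ∈ s) := by
  constructor
  · intro h i hi
    rw [← h]
    simp [Finset.mem_filter, hi]
  · intro h
    ext i
    simp only [Finset.mem_filter]
    constructor
    · rintro ⟨hiS, hP⟩
      exact (h i hiS).mp hP
    · intro his
      exact ⟨hs his, (h i (hs his)).mpr his⟩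

/-- The key conditional-independence bound: the probability that both exceedance counts are at
least `r` and yet no good pair has a large `N` value is at most `exp (-r² q(τ))`. -/
lemma bad3_bound (hW : IIDStdGaussian μ W) (t τ : ℝ) {r : ℝ} (hr : 0 ≤ r)
    (S₁ S₂ : Finset ℕ) :
    μ {ω | r ≤ ((S₁.filter (fun i => t ≤ W (e1 i) ω)).card : ℝ)
        ∧ r ≤ ((S₂.filter (fun j => t ≤ W (e2 j) ω)).card : ℝ)
        ∧ ∀ i ∈ S₁.filter (fun i => t ≤ W (e1 i) ω),
            ∀ j ∈ S₂.filter (fun j => t ≤ W (e2 j) ω), W (Sum.inl (i, j)) ω < τ}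
      ≤ ENNReal.ofReal (rexp (-(r ^ 2) * qR τ)) := by
  classical
  set q' := qR τ with hq'
  set G₁ : Ω → Finset ℕ := fun ω => S₁.filter (fun i => t ≤ W (e1 i) ω) with hG₁
  set G₂ : Ω → Finset ℕ := fun ω => S₂.filter (fun j => t ≤ W (e2 j) ω) with hG₂
  set F : Finset (Finset ℕ × Finset ℕ) :=
    (S₁.powerset ×ˢ S₂.powerset).filter
      (fun s => r ≤ (s.1.card : ℝ) ∧ r ≤ (s.2.card : ℝ)) with hF
  -- the coordinate target sets
  set Bs : Finset ℕ × Finset ℕ → ((ℕ × ℕ) ⊕ (ℕ ⊕ ℕ)) → Set ℝ := fun s =>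
    Sum.elim (fun _ => Set.Iio τ)
      (Sum.elim (fun i => if i ∈ s.1 then Set.Ici t else Set.Iio t)
        (fun j => if j ∈ s.2 then Set.Ici t else Set.Iio t)) with hBs
  have hBsmeas : ∀ s k, MeasurableSet (Bs s k) := by
    rintro s (⟨i, j⟩ | (i | j)) <;>
      · simp only [hBs, Sum.elim_inl, Sum.elim_inr]
        first
          | exact measurableSet_Iio
          | split <;> [exact measurableSet_Ici; exact measurableSet_Iio]
  set u' : Finset ℕ × Finset ℕ → Finset ((ℕ × ℕ) ⊕ (ℕ ⊕ ℕ)) := fun _ =>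
    S₁.image e1 ∪ S₂.image e2 with hu'
  set u : Finset ℕ × Finset ℕ → Finset ((ℕ × ℕ) ⊕ (ℕ ⊕ ℕ)) := fun s =>
    (S₁.image e1 ∪ S₂.image e2) ∪ (s.1 ×ˢ s.2).image Sum.inl with hu
  set GE : Finset ℕ × Finset ℕ → Set Ω := fun s => {ω | G₁ ω = s.1 ∧ G₂ ω = s.2} with hGE
  set Es : Finset ℕ × Finset ℕ → Set Ω := fun s =>
    {ω | G₁ ω = s.1 ∧ G₂ ω = s.2 ∧ ∀ i ∈ s.1, ∀ j ∈ s.2, W (Sum.inl (i, j)) ω < τ} with hEs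
  -- identification of `GE` and `Es` as intersections of coordinate events
  have hGE_eq : ∀ s ∈ F, GE s = ⋂ k ∈ u' s, W k ⁻¹' Bs s k := by
    intro s hsF
    obtain ⟨hmem, -⟩ := Finset.mem_filter.mp hsF
    obtain ⟨hs1, hs2⟩ := Finset.mem_product.mp hmem
    rw [Finset.mem_powerset] at hs1 hs2
    ext ω
    simp only [hGE, Set.mem_setOf_eq, Set.mem_iInter, hu', Finset.mem_union,
      Finset.mem_image]
    constructor
    · rintro ⟨h1, h2⟩ k hk
      rcases hk with ⟨i, hi, rfl⟩ | ⟨j, hj, rfl⟩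
      · have := (filter_eq_iff' hs1 _).mp h1 i hi
        simp only [hBs, e1, Sum.elim_inr, Sum.elim_inl, Set.mem_preimage]
        split
        · next hin => exact this.mpr hin
        · next hnin => exact Set.mem_Iio.mpr (lt_of_not_ge (fun hc => hnin (this.mp hc)))
      · have := (filter_eq_iff' hs2 _).mp h2 j hj
        simp only [hBs, e2, Sum.elim_inr, Set.mem_preimage]
        split
        · next hin => exact this.mpr hin
        · next hnin => exact Set.mem_Iio.mpr (lt_of_not_ge (fun hc => hnin (this.mp hc)))
    · intro h
      constructor
      · refine (filter_eq_iff' hs1 _).mpr (fun i hi => ?_)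
        have := h (e1 i) (Or.inl ⟨i, hi, rfl⟩)
        simp only [hBs, e1, Sum.elim_inr, Sum.elim_inl, Set.mem_preimage] at this
        constructor
        · intro hti
          by_contra hnin
          rw [if_neg hnin] at this
          exact absurd hti (not_le.mpr this)
        · intro hin
          rwa [if_pos hin] at this
      · refine (filter_eq_iff' hs2 _).mpr (fun j hj => ?_)
        have := h (e2 j) (Or.inr ⟨j, hj, rfl⟩)
        simp only [hBs, e2, Sum.elim_inr, Set.mem_preimage] at this
        constructor
        · intro hti
          by_contra hnin
          rw [if_neg hnin] at this
          exact absurd hti (not_le.mpr this)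
        · intro hin
          rwa [if_pos hin] at this
  have hEs_eq : ∀ s ∈ F, Es s = ⋂ k ∈ u s, W k ⁻¹' Bs s k := by
    intro s hsF
    have hGEeq := hGE_eq s hsF
    ext ω
    have hωGE : (G₁ ω = s.1 ∧ G₂ ω = s.2) ↔ ∀ k ∈ u' s, W k ω ∈ Bs s k := by
      have := Set.ext_iff.mp hGEeq ω
      simpa only [hGE, Set.mem_setOf_eq, Set.mem_iInter, Set.mem_preimage] using this
    simp only [hEs, Set.mem_setOf_eq, Set.mem_iInter, hu, Finset.mem_union, Set.mem_preimage]
    constructor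
    · rintro ⟨h1, h2, h3⟩ k hk
      rcases hk with hk' | hk'
      · exact hωGE.mp ⟨h1, h2⟩ k (by simpa [hu'] using hk')
      · obtain ⟨⟨i, j⟩, hij, rfl⟩ := Finset.mem_image.mp hk'
        obtain ⟨hi, hj⟩ := Finset.mem_product.mp hij
        simpa only [hBs, Sum.elim_inl, Set.mem_Iio] using h3 i hi j hj
    · intro h
      have hGEω : G₁ ω = s.1 ∧ G₂ ω = s.2 :=
        hωGE.mpr (fun k hk => h k (Or.inl (by simpa [hu'] using hk)))
      refine ⟨hGEω.1, hGEω.2, fun i hi j hj => ?_⟩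
      have := h (Sum.inl (i, j)) (Or.inr (Finset.mem_image.mpr
        ⟨(i, j), Finset.mem_product.mpr ⟨hi, hj⟩, rfl⟩))
      simpa only [hBs, Sum.elim_inl, Set.mem_Iio] using this
  -- main inclusion
  have hincl : {ω | r ≤ ((G₁ ω).card : ℝ) ∧ r ≤ ((G₂ ω).card : ℝ)
      ∧ ∀ i ∈ G₁ ω, ∀ j ∈ G₂ ω, W (Sum.inl (i, j)) ω < τ} ⊆ ⋃ s ∈ F, Es s := by
    intro ω hω
    obtain ⟨hr1, hr2, hN⟩ := hω
    refine Set.mem_biUnion (show (G₁ ω, G₂ ω) ∈ F from ?_) ?_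
    · refine Finset.mem_filter.mpr ⟨Finset.mem_product.mpr ⟨?_, ?_⟩, hr1, hr2⟩
      · exact Finset.mem_powerset.mpr (Finset.filter_subset _ _)
      · exact Finset.mem_powerset.mpr (Finset.filter_subset _ _)
    · exact ⟨rfl, rfl, hN⟩
  -- disjoint union structure and the bound on each piece
  have hdisj_img : ∀ s : Finset ℕ × Finset ℕ,
      Disjoint (S₁.image e1 ∪ S₂.image e2) ((s.1 ×ˢ s.2).image Sum.inl) := by
    intro s
    rw [Finset.disjoint_left]
    intro k hk hk'
    obtain ⟨⟨i, j⟩, -, rfl⟩ := Finset.mem_image.mp hk'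
    rcases Finset.mem_union.mp hk with hk'' | hk''
    · obtain ⟨i', -, h⟩ := Finset.mem_image.mp hk''
      exact absurd h (by simp [e1])
    · obtain ⟨j', -, h⟩ := Finset.mem_image.mp hk''
      exact absurd h (by simp [e2])
  have hEs_le : ∀ s ∈ F, μ (Es s) ≤ μ (GE s) * ENNReal.ofReal (rexp (-(r ^ 2) * q')) := by
    intro s hsF
    obtain ⟨-, hrs1, hrs2⟩ := Finset.mem_filter.mp hsF
    rw [hEs_eq s hsF, hGE_eq s hsF]
    rw [hW.indep.measure_inter_preimage_eq_mul (u s) (fun k _ => hBsmeas s k),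
      hW.indep.measure_inter_preimage_eq_mul (u' s) (fun k _ => hBsmeas s k)]
    rw [hu, Finset.prod_union (hdisj_img s)]
    refine mul_le_mul_right ?_ _
    rw [Finset.prod_image (fun x _ y _ h => Sum.inl_injective h)]
    have hfac : ∀ x ∈ s.1 ×ˢ s.2,
        μ (W (Sum.inl x) ⁻¹' Bs s (Sum.inl x)) ≤ ENNReal.ofReal (rexp (-q')) := by
      intro x _
      have : W (Sum.inl x) ⁻¹' Bs s (Sum.inl x) = {ω | W (Sum.inl x) ω < τ} := by
        simp only [hBs, Sum.elim_inl]
        rfl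
      rw [this]
      exact measure_lt_le hW _ τ
    calc ∏ x ∈ s.1 ×ˢ s.2, μ (W (Sum.inl x) ⁻¹' Bs s (Sum.inl x))
        ≤ ∏ _x ∈ s.1 ×ˢ s.2, ENNReal.ofReal (rexp (-q')) := Finset.prod_le_prod' hfac
      _ = ENNReal.ofReal (rexp (-q')) ^ (s.1.card * s.2.card) := by
          rw [Finset.prod_const, Finset.card_product]
      _ = ENNReal.ofReal (rexp (-q') ^ (s.1.card * s.2.card)) := by
          rw [ENNReal.ofReal_pow (Real.exp_nonneg _)]
      _ ≤ ENNReal.ofReal (rexp (-(r ^ 2) * q')) := by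
          apply ENNReal.ofReal_le_ofReal
          rw [← Real.exp_nat_mul]
          apply Real.exp_le_exp.mpr
          have hq'0 : 0 ≤ q' := qR_nonneg τ
          have hcard : r ^ 2 ≤ ((s.1.card * s.2.card : ℕ) : ℝ) := by
            push_cast
            nlinarith
          nlinarith
  -- sum up
  calc μ {ω | r ≤ ((G₁ ω).card : ℝ) ∧ r ≤ ((G₂ ω).card : ℝ)
      ∧ ∀ i ∈ G₁ ω, ∀ j ∈ G₂ ω, W (Sum.inl (i, j)) ω < τ}
      ≤ μ (⋃ s ∈ F, Es s) := measure_mono hincl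
    _ ≤ ∑ s ∈ F, μ (Es s) := measure_biUnion_finset_le F Es
    _ ≤ ∑ s ∈ F, μ (GE s) * ENNReal.ofReal (rexp (-(r ^ 2) * q')) :=
        Finset.sum_le_sum hEs_le
    _ = (∑ s ∈ F, μ (GE s)) * ENNReal.ofReal (rexp (-(r ^ 2) * q')) := by
        rw [Finset.sum_mul]
    _ ≤ 1 * ENNReal.ofReal (rexp (-(r ^ 2) * q')) := by
        refine mul_le_mul_left ?_ _
        have hdisjGE : (↑F : Set (Finset ℕ × Finset ℕ)).PairwiseDisjoint GE := by
          intro s hs s' hs' hne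
          rw [Function.onFun, Set.disjoint_left]
          intro ω hω hω'
          exact hne (by
            obtain ⟨h1, h2⟩ := hω
            obtain ⟨h1', h2'⟩ := hω'
            exact Prod.ext (h1 ▸ h1') (h2 ▸ h2'))
        have hGEmeas : ∀ s ∈ F, MeasurableSet (GE s) := by
          intro s hsF
          rw [hGE_eq s hsF]
          exact Finset.measurableSet_biInter _
            (fun k _ => (hW.meas k) (hBsmeas s k))
        rw [← measure_biUnion_finset hdisjGE hGEmeas]
        exact prob_le_one
    _ = ENNReal.ofReal (rexp (-(r ^ 2) * q')) := one_mul _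

/-- Gaussian constant `(2π)^{-1/2} e^{-1/2}`. -/
def cGauss : ℝ := (Real.sqrt (2 * π))⁻¹ * rexp (-(1/2 : ℝ))

lemma cGauss_pos : 0 < cGauss := by
  have h : (0:ℝ) < Real.sqrt (2 * π) := Real.sqrt_pos.mpr (by positivity)
  exact mul_pos (inv_pos.mpr h) (Real.exp_pos _)

lemma qR_lower' {t B : ℝ} (ht : 0 ≤ t) (htB : t ≤ B) :
    cGauss * rexp (-(t ^ 2) / 2 - B) ≤ qR t := by
  refine le_trans ?_ (qR_lower ht)
  rw [cGauss, mul_assoc, ← Real.exp_add]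
  refine mul_le_mul_of_nonneg_left (Real.exp_le_exp.mpr (by nlinarith)) ?_
  positivity

lemma tendsto_mul_sub_sqrt {c b : ℝ} (hc : 0 < c) :
    Tendsto (fun L : ℝ => c * L - b * Real.sqrt L) atTop atTop := by
  have hev : ∀ᶠ L : ℝ in atTop, c / 2 * L ≤ c * L - b * Real.sqrt L := by
    filter_upwards [eventually_ge_atTop ((2 * |b| / c) ^ 2), eventually_ge_atTop (0:ℝ)]
      with L hL hL0
    have hsq : Real.sqrt L * Real.sqrt L = L := Real.mul_self_sqrt hL0
    have h1 : 2 * |b| / c ≤ Real.sqrt L := by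
      rw [show (2 * |b| / c) = Real.sqrt ((2 * |b| / c) ^ 2) from
        (Real.sqrt_sq (by positivity)).symm]
      exact Real.sqrt_le_sqrt hL
    have hb : b * Real.sqrt L ≤ |b| * Real.sqrt L :=
      mul_le_mul_of_nonneg_right (le_abs_self b) (Real.sqrt_nonneg L)
    have h2 : |b| * Real.sqrt L ≤ c / 2 * L := by
      have := mul_le_mul_of_nonneg_right h1 (Real.sqrt_nonneg L)
      calc |b| * Real.sqrt L = c / 2 * (2 * |b| / c * Real.sqrt L) := by field_simp
        _ ≤ c / 2 * (Real.sqrt L * Real.sqrt L) := by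
            refine mul_le_mul_of_nonneg_left this (by positivity)
        _ = c / 2 * L := by rw [hsq]
    linarith
  exact tendsto_atTop_mono' atTop hev (Tendsto.const_mul_atTop (by linarith) tendsto_id)

lemma tendsto_exp_neg_zero {f : ℕ → ℝ} (hf : Tendsto f atTop atTop) :
    Tendsto (fun n => rexp (-f n)) atTop (𝓝 0) :=
  Real.tendsto_exp_atBot.comp (tendsto_neg_atTop_atBot.comp hf)

set_option maxHeartbeats 1000000 in
/-- The master per-`n` estimate. -/
lemma master (hW : IIDStdGaussian μ W) {ρ : ℝ} (hρ : ρ ∈ Set.Icc (0:ℝ) (1/2))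
    {ε : ℝ} (hε0 : 0 < ε) (hε1 : ε ≤ 1) {P : ℕ} (hP : 2 ≤ P) :
    μ {x | ε ≤ dist ((⨆ qq : {qq : ℕ × ℕ // qq.1 < qq.2 ∧ qq.2 < P},
          Yfield ρ W qq.1.1 qq.1.2 x) / Real.sqrt (Real.log P)) 2}
      ≤ ENNReal.ofReal (rexp (-(2 * ε * Real.log P)))
        + (ENNReal.ofReal ((16 / cGauss) * rexp (-((1 - 2 * ρ * (1 - ε/4) ^ 2) * Real.log P
              - 2 * Real.sqrt (Real.log P))))
          + (ENNReal.ofReal ((16 / cGauss) * rexp (-((1 - 2 * ρ * (1 - ε/4) ^ 2) * Real.log P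
              - 2 * Real.sqrt (Real.log P))))
            + ENNReal.ofReal (rexp (-(cGauss ^ 3 / 64 * rexp (2 * (ε/4) * Real.log P
              - 6 * Real.sqrt (Real.log P))))))) := by
  classical
  obtain ⟨hρ0, hρ2⟩ := hρ
  have hcG := cGauss_pos
  set δ : ℝ := ε / 4 with hδdef
  have hδ0 : 0 < δ := by positivity
  have hδ1 : δ ≤ 1 / 4 := by rw [hδdef]; linarith
  set L : ℝ := Real.log P with hLdef
  have hL : 0 < L := Real.log_pos (by exact_mod_cast hP)
  set sqL : ℝ := Real.sqrt L with hsqLdef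
  have hsqL : 0 < sqL := Real.sqrt_pos.mpr hL
  have hsqLsq : sqL ^ 2 = L := Real.sq_sqrt hL.le
  have hPeL : (P : ℝ) = rexp L := (Real.exp_log (by positivity)).symm
  set t : ℝ := (1 - δ) * Real.sqrt (2 * ρ) * Real.sqrt (2 * L) with htdef
  set τ : ℝ := 2 * (1 - δ) ^ 2 * Real.sqrt (1 - 2 * ρ) * sqL with hτdef
  set h : ℕ := P / 2 with hhdef
  set S₁ : Finset ℕ := Finset.range h with hS₁def
  set S₂ : Finset ℕ := Finset.Ico h P with hS₂def
  set q : ℝ := qR t with hqdef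
  set q' : ℝ := qR τ with hq'def
  set r : ℝ := (h : ℝ) * q / 2 with hrdef
  -- basic numeric facts
  have ht0 : 0 ≤ t := by
    rw [htdef]
    have : (0:ℝ) ≤ 1 - δ := by linarith
    positivity
  have hτ0 : 0 ≤ τ := by
    rw [hτdef]
    have : (0:ℝ) ≤ 1 - δ := by linarith
    positivity
  have hsqL2 : Real.sqrt (2 * L) = Real.sqrt 2 * sqL := by
    rw [hsqLdef, Real.sqrt_mul (by norm_num : (0:ℝ) ≤ 2)]
  have hsqrt2 : Real.sqrt 2 * Real.sqrt 2 = 2 := Real.mul_self_sqrt (by norm_num)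
  have hsqrt2_le : Real.sqrt 2 ≤ 2 := by
    have h4 : Real.sqrt 4 = 2 := by
      rw [show (4:ℝ) = 2 ^ 2 by norm_num, Real.sqrt_sq (by norm_num : (0:ℝ) ≤ 2)]
    calc Real.sqrt 2 ≤ Real.sqrt 4 := Real.sqrt_le_sqrt (by norm_num)
      _ = 2 := h4
  have hsqrt2ρ_le : Real.sqrt (2 * ρ) ≤ 1 := Real.sqrt_le_one.mpr (by linarith)
  have hsqrt12ρ_le : Real.sqrt (1 - 2 * ρ) ≤ 1 := Real.sqrt_le_one.mpr (by linarith)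
  have ht_le : t ≤ 2 * sqL := by
    rw [htdef, hsqL2]
    have h1 : (1 - δ) * Real.sqrt (2 * ρ) ≤ 1 :=
      mul_le_one₀ (by linarith) (Real.sqrt_nonneg _) hsqrt2ρ_le
    calc (1 - δ) * Real.sqrt (2 * ρ) * (Real.sqrt 2 * sqL)
        ≤ 1 * (Real.sqrt 2 * sqL) := by
          refine mul_le_mul_of_nonneg_right h1 (by positivity)
      _ = Real.sqrt 2 * sqL := one_mul _
      _ ≤ 2 * sqL := mul_le_mul_of_nonneg_right hsqrt2_le hsqL.le
  have hδsq1 : (1 - δ) ^ 2 ≤ 1 :=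
    pow_le_one₀ (by linarith) (by linarith)
  have hτ_le : τ ≤ 2 * sqL := by
    rw [hτdef]
    have h1 : (1 - δ) ^ 2 * Real.sqrt (1 - 2 * ρ) ≤ 1 :=
      mul_le_one₀ hδsq1 (Real.sqrt_nonneg _) hsqrt12ρ_le
    have h2 := mul_le_mul_of_nonneg_right h1 hsqL.le
    calc 2 * (1 - δ) ^ 2 * Real.sqrt (1 - 2 * ρ) * sqL
        = 2 * ((1 - δ) ^ 2 * Real.sqrt (1 - 2 * ρ) * sqL) := by ring
      _ ≤ 2 * (1 * sqL) := by linarith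
      _ = 2 * sqL := by ring
  have ht_sq : t ^ 2 = 2 * ρ * (1 - δ) ^ 2 * (2 * L) := by
    rw [htdef, mul_pow, mul_pow, Real.sq_sqrt (by linarith : (0:ℝ) ≤ 2 * ρ),
      Real.sq_sqrt (by linarith : (0:ℝ) ≤ 2 * L)]
    ring
  have hτ_sq : τ ^ 2 = 4 * (1 - δ) ^ 4 * (1 - 2 * ρ) * L := by
    rw [hτdef, mul_pow, mul_pow, mul_pow, Real.sq_sqrt (by linarith : (0:ℝ) ≤ 1 - 2 * ρ),
      hsqLsq]
    ring
  have hq_low : cGauss * rexp (-(2 * ρ * (1 - δ) ^ 2 * L) - 2 * sqL) ≤ q := by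
    have := qR_lower' ht0 ht_le
    rw [hqdef]
    refine le_trans (le_of_eq ?_) this
    congr 1
    rw [ht_sq]
    ring
  have hq'_low : cGauss * rexp (-(2 * (1 - δ) ^ 4 * (1 - 2 * ρ) * L) - 2 * sqL) ≤ q' := by
    have := qR_lower' hτ0 hτ_le
    rw [hq'def]
    refine le_trans (le_of_eq ?_) this
    congr 1
    rw [hτ_sq]
    ring
  have hq_pos : 0 < q := lt_of_lt_of_le (by positivity) hq_low
  have hq'_pos : 0 < q' := lt_of_lt_of_le (by positivity) hq'_low
  have hh4 : (P : ℝ) / 4 ≤ (h : ℝ) := by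
    have : P ≤ 4 * (P / 2) := by omega
    have := (Nat.cast_le (α := ℝ)).mpr this
    push_cast at this
    rw [hhdef]
    linarith
  have hhq_low : cGauss / 4 * rexp ((1 - 2 * ρ * (1 - δ) ^ 2) * L - 2 * sqL) ≤ (h : ℝ) * q := by
    have h1 : (P : ℝ) / 4 * (cGauss * rexp (-(2 * ρ * (1 - δ) ^ 2 * L) - 2 * sqL))
        ≤ (h : ℝ) * q := by
      refine mul_le_mul hh4 hq_low (by positivity) (by positivity)
    refine le_trans (le_of_eq ?_) h1
    have hee : rexp L * rexp (-(2 * ρ * (1 - δ) ^ 2 * L) - 2 * sqL)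
        = rexp ((1 - 2 * ρ * (1 - δ) ^ 2) * L - 2 * sqL) := by
      rw [← Real.exp_add]; congr 1; ring
    rw [hPeL, ← hee]
    ring
  have hS₁card : S₁.card = h := by rw [hS₁def, Finset.card_range]
  have hS₂card : S₂.card = P - h := by rw [hS₂def, Nat.card_Ico]
  have hhpos : 0 < h := by omega
  have hS₂ge : (h : ℝ) ≤ (S₂.card : ℝ) := by
    rw [hS₂card]
    have : h ≤ P - h := by omega
    exact_mod_cast this
  -- Finiteness of the index type
  have hfin : {qq : ℕ × ℕ | qq.1 < qq.2 ∧ qq.2 < P}.Finite := by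
    refine Set.Finite.subset ((Finset.range P ×ˢ Finset.range P) : Finset (ℕ × ℕ)).finite_toSet
      (fun qq hqq => ?_)
    simp only [Finset.coe_product, Set.mem_prod, Finset.mem_coe, Finset.mem_range]
    obtain ⟨h1, h2⟩ := hqq
    exact ⟨lt_trans h1 h2, h2⟩
  haveI hIfin : Finite {qq : ℕ × ℕ // qq.1 < qq.2 ∧ qq.2 < P} := hfin.to_subtype
  set MS : Ω → ℝ := fun x => ⨆ qq : {qq : ℕ × ℕ // qq.1 < qq.2 ∧ qq.2 < P},
      Yfield ρ W qq.1.1 qq.1.2 x with hMSdef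
  -- the main inclusion
  have hsub : {x | ε ≤ dist (MS x / sqL) 2} ⊆
      {x | (2 + ε) * sqL ≤ MS x}
      ∪ ({x | ((S₁.filter (fun i => t ≤ W (e1 i) x)).card : ℝ) < (S₁.card : ℝ) * qR t / 2}
      ∪ ({x | ((S₂.filter (fun j => t ≤ W (e2 j) x)).card : ℝ) < (S₂.card : ℝ) * qR t / 2}
      ∪ {x | r ≤ ((S₁.filter (fun i => t ≤ W (e1 i) x)).card : ℝ)
          ∧ r ≤ ((S₂.filter (fun j => t ≤ W (e2 j) x)).card : ℝ)
          ∧ ∀ i ∈ S₁.filter (fun i => t ≤ W (e1 i) x),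
              ∀ j ∈ S₂.filter (fun j => t ≤ W (e2 j) x), W (Sum.inl (i, j)) x < τ})) := by
    intro x hx
    simp only [Set.mem_setOf_eq] at hx
    by_contra hcon
    simp only [Set.mem_union, Set.mem_setOf_eq, not_or] at hcon
    obtain ⟨hU, hC1, hC2, hB3⟩ := hcon
    push_neg at hU hC1 hC2
    have hr1 : r ≤ ((S₁.filter (fun i => t ≤ W (e1 i) x)).card : ℝ) := by
      refine le_trans (le_of_eq ?_) hC1
      rw [hS₁card, hrdef, hqdef]
    have hr2 : r ≤ ((S₂.filter (fun j => t ≤ W (e2 j) x)).card : ℝ) := by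
      refine le_trans ?_ hC2
      rw [hrdef, hqdef]
      have := mul_le_mul_of_nonneg_right hS₂ge (qR_nonneg t)
      linarith
    have hex : ¬ (∀ i ∈ S₁.filter (fun i => t ≤ W (e1 i) x),
        ∀ j ∈ S₂.filter (fun j => t ≤ W (e2 j) x), W (Sum.inl (i, j)) x < τ) :=
      fun hC => hB3 ⟨hr1, hr2, hC⟩
    push_neg at hex
    obtain ⟨i, hi, j, hj, hN⟩ := hex
    rw [Finset.mem_filter] at hi hj
    obtain ⟨hiS, hit⟩ := hi
    obtain ⟨hjS, hjt⟩ := hj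
    rw [hS₁def, Finset.mem_range] at hiS
    rw [hS₂def, Finset.mem_Ico] at hjS
    have hij : i < j := lt_of_lt_of_le hiS hjS.1
    have hjP : j < P := hjS.2
    -- lower bound the field at (i, j)
    have hb0 : (0:ℝ) ≤ Real.sqrt (1 - 2 * ρ) := Real.sqrt_nonneg _
    have hc0 : (0:ℝ) ≤ Real.sqrt ρ := Real.sqrt_nonneg _
    have hY1 : Real.sqrt (1 - 2 * ρ) * τ + Real.sqrt ρ * (t + t) ≤ Yfield ρ W i j x := by
      rw [Yfield]
      have h1 : Real.sqrt (1 - 2 * ρ) * τ ≤ Real.sqrt (1 - 2 * ρ) * W (Sum.inl (i, j)) x :=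
        mul_le_mul_of_nonneg_left hN hb0
      have h2 : Real.sqrt ρ * (t + t)
          ≤ Real.sqrt ρ * (W (Sum.inr (Sum.inl i)) x + W (Sum.inr (Sum.inr j)) x) :=
        mul_le_mul_of_nonneg_left (add_le_add hit hjt) hc0
      linarith
    have hbτ : Real.sqrt (1 - 2 * ρ) * τ = 2 * (1 - δ) ^ 2 * (1 - 2 * ρ) * sqL := by
      rw [hτdef]
      have hss : Real.sqrt (1 - 2 * ρ) * Real.sqrt (1 - 2 * ρ) = 1 - 2 * ρ :=
        Real.mul_self_sqrt (by linarith)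
      linear_combination (2 * (1 - δ) ^ 2 * sqL) * hss
    have hct : Real.sqrt ρ * (t + t) = 4 * ρ * (1 - δ) * sqL := by
      rw [htdef, hsqL2, show (2:ℝ) * ρ = ρ * 2 from mul_comm 2 ρ,
        Real.sqrt_mul hρ0 2]
      have h1 : Real.sqrt ρ * Real.sqrt ρ = ρ := Real.mul_self_sqrt hρ0
      linear_combination (2 * (1 - δ) * sqL * (Real.sqrt ρ * Real.sqrt ρ)) * hsqrt2
        + (4 * (1 - δ) * sqL) * h1
    have hY2 : 2 * (1 - δ) ^ 2 * sqL ≤ Yfield ρ W i j x := by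
      refine le_trans ?_ hY1
      rw [hbτ, hct]
      linarith [mul_nonneg (mul_nonneg (mul_nonneg hρ0 hδ0.le)
        (by linarith : (0:ℝ) ≤ 1 - δ)) hsqL.le]
    have hMS_lb : 2 * (1 - δ) ^ 2 * sqL ≤ MS x := by
      refine le_trans hY2 ?_
      have hbdd : BddAbove (Set.range (fun qq : {qq : ℕ × ℕ // qq.1 < qq.2 ∧ qq.2 < P} =>
          Yfield ρ W qq.1.1 qq.1.2 x)) := (Set.finite_range _).bddAbove
      exact le_ciSup hbdd ⟨(i, j), hij, hjP⟩
    -- conclude dist < ε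
    have hlow : (2 - ε) * sqL < MS x := by
      refine lt_of_lt_of_le ?_ hMS_lb
      have h2 : 2 - ε < 2 * (1 - δ) ^ 2 := by
        have hh : 2 * (1 - δ) ^ 2 - (2 - ε) = ε ^ 2 / 8 := by rw [hδdef]; ring
        have := pow_pos hε0 2
        linarith
      exact mul_lt_mul_of_pos_right h2 hsqL
    have hupp : MS x < (2 + ε) * sqL := hU
    have hdist : dist (MS x / sqL) 2 < ε := by
      rw [Real.dist_eq, abs_sub_lt_iff]
      constructor
      · have hd : MS x / sqL < 2 + ε := (div_lt_iff₀ hsqL).mpr (by linarith)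
        linarith
      · have hd : 2 - ε < MS x / sqL := (lt_div_iff₀ hsqL).mpr (by linarith)
        linarith
    linarith
  -- upper tail bound
  have hU_bound : μ {x | (2 + ε) * sqL ≤ MS x}
      ≤ ENNReal.ofReal (rexp (-(2 * ε * L))) := by
    set u : ℝ := (2 + ε) * sqL with hudef
    have hu0 : 0 ≤ u := by positivity
    set F : Finset (ℕ × ℕ) := (Finset.range P ×ˢ Finset.range P).filter
      (fun e => e.1 < e.2) with hFdef
    have hsubU : {x | u ≤ MS x} ⊆ ⋃ e ∈ F, {x | u ≤ Yfield ρ W e.1 e.2 x} := by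
      intro x hx
      haveI hne : Nonempty {qq : ℕ × ℕ // qq.1 < qq.2 ∧ qq.2 < P} :=
        ⟨⟨(0, 1), Nat.zero_lt_one, by omega⟩⟩
      obtain ⟨qq₀, hqq₀⟩ := Finite.exists_max
        (fun qq : {qq : ℕ × ℕ // qq.1 < qq.2 ∧ qq.2 < P} => Yfield ρ W qq.1.1 qq.1.2 x)
      have hsup_le : MS x ≤ Yfield ρ W qq₀.1.1 qq₀.1.2 x := ciSup_le hqq₀
      have hqF : qq₀.1 ∈ F := by
        rw [hFdef, Finset.mem_filter, Finset.mem_product, Finset.mem_range, Finset.mem_range]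
        exact ⟨⟨lt_trans qq₀.2.1 qq₀.2.2, qq₀.2.2⟩, qq₀.2.1⟩
      refine Set.mem_biUnion hqF ?_
      exact Set.mem_setOf_eq ▸ le_trans hx hsup_le
    have hcardF : (F.card : ℝ) ≤ (P : ℝ) ^ 2 := by
      have h1 : F.card ≤ (Finset.range P ×ˢ Finset.range P).card :=
        Finset.card_filter_le _ _
      rw [Finset.card_product, Finset.card_range] at h1
      have h2 := (Nat.cast_le (α := ℝ)).mpr h1
      push_cast at h2
      calc (F.card : ℝ) ≤ (P : ℝ) * (P : ℝ) := h2
        _ = (P : ℝ) ^ 2 := by ring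
    calc μ {x | u ≤ MS x} ≤ μ (⋃ e ∈ F, {x | u ≤ Yfield ρ W e.1 e.2 x}) := measure_mono hsubU
      _ ≤ ∑ e ∈ F, μ {x | u ≤ Yfield ρ W e.1 e.2 x} := measure_biUnion_finset_le F _
      _ ≤ ∑ _e ∈ F, ENNReal.ofReal (rexp (-(u ^ 2) / 2)) :=
          Finset.sum_le_sum (fun e _ => Yfield_tail hW ⟨hρ0, hρ2⟩ e.1 e.2 hu0)
      _ = (F.card : ℝ≥0∞) * ENNReal.ofReal (rexp (-(u ^ 2) / 2)) := by
          rw [Finset.sum_const, nsmul_eq_mul]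
      _ ≤ ENNReal.ofReal ((P : ℝ) ^ 2 * rexp (-(u ^ 2) / 2)) := by
          rw [← ENNReal.ofReal_natCast F.card, ← ENNReal.ofReal_mul (Nat.cast_nonneg _)]
          exact ENNReal.ofReal_le_ofReal
            (mul_le_mul_of_nonneg_right hcardF (Real.exp_nonneg _))
      _ ≤ ENNReal.ofReal (rexp (-(2 * ε * L))) := by
          apply ENNReal.ofReal_le_ofReal
          have husq : u ^ 2 = (2 + ε) ^ 2 * L := by
            rw [hudef, mul_pow, hsqLsq]
          rw [hPeL, pow_two, ← Real.exp_add, ← Real.exp_add]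
          apply Real.exp_le_exp.mpr
          rw [husq]
          have hε2L : 0 ≤ ε ^ 2 * L := mul_nonneg (sq_nonneg ε) hL.le
          linarith
  -- Chebyshev bounds
  have hbigger : (0:ℝ) < cGauss / 4 * rexp ((1 - 2 * ρ * (1 - δ) ^ 2) * L - 2 * sqL) := by
    positivity
  have hchebE : ∀ S : Finset ℕ, (h : ℝ) * q ≤ (S.card : ℝ) * q →
      ENNReal.ofReal (4 / ((S.card : ℝ) * qR t))
        ≤ ENNReal.ofReal ((16 / cGauss)
            * rexp (-((1 - 2 * ρ * (1 - δ) ^ 2) * L - 2 * sqL))) := by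
    intro S hSq
    apply ENNReal.ofReal_le_ofReal
    have hden : cGauss / 4 * rexp ((1 - 2 * ρ * (1 - δ) ^ 2) * L - 2 * sqL)
        ≤ (S.card : ℝ) * qR t := le_trans hhq_low (by rw [← hqdef]; exact hSq)
    calc (4:ℝ) / ((S.card : ℝ) * qR t)
        ≤ 4 / (cGauss / 4 * rexp ((1 - 2 * ρ * (1 - δ) ^ 2) * L - 2 * sqL)) :=
          div_le_div_of_nonneg_left (by norm_num) hbigger hden
      _ = (16 / cGauss) * rexp (-((1 - 2 * ρ * (1 - δ) ^ 2) * L - 2 * sqL)) := by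
          rw [Real.exp_neg]
          have he := Real.exp_ne_zero ((1 - 2 * ρ * (1 - δ) ^ 2) * L - 2 * sqL)
          field_simp
          ring
  have hC1_bound : μ {x | ((S₁.filter (fun i => t ≤ W (e1 i) x)).card : ℝ)
        < (S₁.card : ℝ) * qR t / 2}
      ≤ ENNReal.ofReal ((16 / cGauss)
          * rexp (-((1 - 2 * ρ * (1 - δ) ^ 2) * L - 2 * sqL))) := by
    refine le_trans (count_chebyshev hW e1_inj t S₁ hq_pos (by rw [hS₁card]; omega)) ?_
    refine hchebE S₁ ?_
    rw [hS₁card]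
  have hC2_bound : μ {x | ((S₂.filter (fun j => t ≤ W (e2 j) x)).card : ℝ)
        < (S₂.card : ℝ) * qR t / 2}
      ≤ ENNReal.ofReal ((16 / cGauss)
          * rexp (-((1 - 2 * ρ * (1 - δ) ^ 2) * L - 2 * sqL))) := by
    refine le_trans (count_chebyshev hW e2_inj t S₂ hq_pos ?_) ?_
    · rw [hS₂card]; omega
    refine hchebE S₂ ?_
    exact mul_le_mul_of_nonneg_right hS₂ge hq_pos.le
  -- bad3 bound
  have hr0 : 0 ≤ r := by rw [hrdef]; positivity
  have hB3_bound : μ {x | r ≤ ((S₁.filter (fun i => t ≤ W (e1 i) x)).card : ℝ)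
        ∧ r ≤ ((S₂.filter (fun j => t ≤ W (e2 j) x)).card : ℝ)
        ∧ ∀ i ∈ S₁.filter (fun i => t ≤ W (e1 i) x),
            ∀ j ∈ S₂.filter (fun j => t ≤ W (e2 j) x), W (Sum.inl (i, j)) x < τ}
      ≤ ENNReal.ofReal (rexp (-(cGauss ^ 3 / 64 * rexp (2 * δ * L - 6 * sqL)))) := by
    refine le_trans (bad3_bound hW t τ hr0 S₁ S₂) ?_
    apply ENNReal.ofReal_le_ofReal
    apply Real.exp_le_exp.mpr
    rw [neg_mul, neg_le_neg_iff]
    -- show  cGauss^3/64 * exp (2δL - 6√L) ≤ r^2 * q'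
    have hr_lb : cGauss / 8 * rexp ((1 - 2 * ρ * (1 - δ) ^ 2) * L - 2 * sqL) ≤ r := by
      rw [hrdef]
      linarith [hhq_low]
    have hr_sq : cGauss ^ 2 / 64 * rexp (2 * ((1 - 2 * ρ * (1 - δ) ^ 2) * L - 2 * sqL))
        ≤ r ^ 2 := by
      have h1 := mul_le_mul hr_lb hr_lb (by positivity) hr0
      calc cGauss ^ 2 / 64 * rexp (2 * ((1 - 2 * ρ * (1 - δ) ^ 2) * L - 2 * sqL))
          = cGauss / 8 * rexp ((1 - 2 * ρ * (1 - δ) ^ 2) * L - 2 * sqL)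
            * (cGauss / 8 * rexp ((1 - 2 * ρ * (1 - δ) ^ 2) * L - 2 * sqL)) := by
            rw [two_mul, Real.exp_add]; ring
        _ ≤ r * r := h1
        _ = r ^ 2 := (pow_two r).symm
    calc cGauss ^ 3 / 64 * rexp (2 * δ * L - 6 * sqL)
        ≤ (cGauss ^ 2 / 64 * rexp (2 * ((1 - 2 * ρ * (1 - δ) ^ 2) * L - 2 * sqL)))
            * (cGauss * rexp (-(2 * (1 - δ) ^ 4 * (1 - 2 * ρ) * L) - 2 * sqL)) := by
          rw [show (cGauss ^ 2 / 64 * rexp (2 * ((1 - 2 * ρ * (1 - δ) ^ 2) * L - 2 * sqL)))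
              * (cGauss * rexp (-(2 * (1 - δ) ^ 4 * (1 - 2 * ρ) * L) - 2 * sqL))
              = cGauss ^ 3 / 64 * rexp ((2 * ((1 - 2 * ρ * (1 - δ) ^ 2) * L - 2 * sqL))
                  + (-(2 * (1 - δ) ^ 4 * (1 - 2 * ρ) * L) - 2 * sqL)) from by
            rw [Real.exp_add]; ring]
          refine mul_le_mul_of_nonneg_left (Real.exp_le_exp.mpr ?_) (by positivity)
          have hβ0 : (0:ℝ) ≤ (1 - δ) ^ 2 := sq_nonneg _
          have hb1 : (1 - δ) ^ 2 ≤ 1 - δ := by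
            have hm : (1 - δ) * (1 - δ) ≤ (1 - δ) * 1 :=
              mul_le_mul_of_nonneg_left (by linarith) (by linarith)
            calc (1 - δ) ^ 2 = (1 - δ) * (1 - δ) := by ring
              _ ≤ (1 - δ) * 1 := hm
              _ = 1 - δ := by ring
          have hint1 : (0:ℝ) ≤ (1 - 2 * ρ) * ((1 - δ) ^ 2) * (1 - (1 - δ) ^ 2) :=
            mul_nonneg (mul_nonneg (by linarith) hβ0) (by linarith [hδsq1])
          have hkey : δ + 2 * ρ * (1 - δ) ^ 2 + ((1 - δ) ^ 2) ^ 2 * (1 - 2 * ρ) ≤ 1 := by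
            linarith [hint1, hb1]
          have hkey' : δ ≤ 1 - 2 * ρ * (1 - δ) ^ 2 - (1 - δ) ^ 4 * (1 - 2 * ρ) := by
            have h4 : (1 - δ) ^ 4 = ((1 - δ) ^ 2) ^ 2 := by ring
            rw [h4]; linarith
          have hmul := mul_le_mul_of_nonneg_right hkey' hL.le
          have hexp : (1 - 2 * ρ * (1 - δ) ^ 2 - (1 - δ) ^ 4 * (1 - 2 * ρ)) * L
              = (1 - 2 * ρ * (1 - δ) ^ 2) * L - (1 - δ) ^ 4 * (1 - 2 * ρ) * L := by ring
          linarith [hmul]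
      _ ≤ r ^ 2 * q' := by
          refine mul_le_mul hr_sq hq'_low (by positivity) ?_
          positivity
  -- put everything together
  calc μ {x | ε ≤ dist (MS x / sqL) 2}
      ≤ μ ({x | (2 + ε) * sqL ≤ MS x}
        ∪ ({x | ((S₁.filter (fun i => t ≤ W (e1 i) x)).card : ℝ) < (S₁.card : ℝ) * qR t / 2}
        ∪ ({x | ((S₂.filter (fun j => t ≤ W (e2 j) x)).card : ℝ) < (S₂.card : ℝ) * qR t / 2}
        ∪ {x | r ≤ ((S₁.filter (fun i => t ≤ W (e1 i) x)).card : ℝ)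
            ∧ r ≤ ((S₂.filter (fun j => t ≤ W (e2 j) x)).card : ℝ)
            ∧ ∀ i ∈ S₁.filter (fun i => t ≤ W (e1 i) x),
                ∀ j ∈ S₂.filter (fun j => t ≤ W (e2 j) x), W (Sum.inl (i, j)) x < τ}))) := by
        exact measure_mono hsub
    _ ≤ ENNReal.ofReal (rexp (-(2 * ε * L)))
        + (ENNReal.ofReal ((16 / cGauss) * rexp (-((1 - 2 * ρ * (1 - δ) ^ 2) * L - 2 * sqL)))
          + (ENNReal.ofReal ((16 / cGauss) * rexp (-((1 - 2 * ρ * (1 - δ) ^ 2) * L - 2 * sqL)))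
            + ENNReal.ofReal (rexp (-(cGauss ^ 3 / 64 * rexp (2 * δ * L - 6 * sqL)))))) := by
        refine le_trans (measure_union_le _ _) (add_le_add hU_bound ?_)
        refine le_trans (measure_union_le _ _) (add_le_add hC1_bound ?_)
        exact le_trans (measure_union_le _ _) (add_le_add hC2_bound hB3_bound)

/-- The first-order behavior of the maximum of the Gaussian field: for any pairwise
correlation `ρ ∈ [0,1/2]` and `p = p_n → ∞`,
`max_{1≤i<j≤p} Y_{ij}/√(log p) → 2` in probability. -/
theorem maxYfield_div_sqrt_log_tendsto_two
    (μ : Measure Ω) [IsProbabilityMeasure μ]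
    (W : (ℕ × ℕ) ⊕ (ℕ ⊕ ℕ) → Ω → ℝ)
    (hW : IIDStdGaussian μ W)
    (ρ : ℝ) (hρ : ρ ∈ Set.Icc (0 : ℝ) (1 / 2))
    (p : ℕ → ℕ) (hp : Tendsto p atTop atTop) :
    TendstoInMeasure μ
      (fun n ω =>
        (⨆ q : {q : ℕ × ℕ // q.1 < q.2 ∧ q.2 < p n}, Yfield ρ W q.1.1 q.1.2 ω) /
          Real.sqrt (Real.log (p n)))
      atTop (fun _ => (2 : ℝ)) := by
  rw [tendstoInMeasure_iff_dist]
  intro ε hε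
  obtain ⟨hρ0, hρ2⟩ := hρ
  set ε' : ℝ := min ε 1 with hε'def
  have hε'0 : 0 < ε' := lt_min hε one_pos
  have hε'1 : ε' ≤ 1 := min_le_right _ _
  have hL : Tendsto (fun n => Real.log (p n)) atTop atTop :=
    Real.tendsto_log_atTop.comp (tendsto_natCast_atTop_atTop.comp hp)
  -- the bound sequence
  set Bnd : ℕ → ℝ≥0∞ := fun n =>
    ENNReal.ofReal (rexp (-(2 * ε' * Real.log (p n))))
      + (ENNReal.ofReal ((16 / cGauss) * rexp (-((1 - 2 * ρ * (1 - ε'/4) ^ 2) * Real.log (p n)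
            - 2 * Real.sqrt (Real.log (p n)))))
        + (ENNReal.ofReal ((16 / cGauss) * rexp (-((1 - 2 * ρ * (1 - ε'/4) ^ 2) * Real.log (p n)
            - 2 * Real.sqrt (Real.log (p n)))))
          + ENNReal.ofReal (rexp (-(cGauss ^ 3 / 64 * rexp (2 * (ε'/4) * Real.log (p n)
            - 6 * Real.sqrt (Real.log (p n)))))))) with hBnd
  have hcoef : 0 < 1 - 2 * ρ * (1 - ε'/4) ^ 2 := by
    have hx0 : 0 < ε'/4 := by positivity
    have hx1 : ε'/4 ≤ 1/4 := by linarith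
    have hb : (1 - ε'/4) ^ 2 ≤ 1 - ε'/4 := by
      have hm : (1 - ε'/4) * (1 - ε'/4) ≤ (1 - ε'/4) * 1 :=
        mul_le_mul_of_nonneg_left (by linarith) (by linarith)
      calc (1 - ε'/4) ^ 2 = (1 - ε'/4) * (1 - ε'/4) := by ring
        _ ≤ (1 - ε'/4) * 1 := hm
        _ = 1 - ε'/4 := by ring
    have h2 := mul_le_mul_of_nonneg_right (show 2 * ρ ≤ 1 by linarith)
      (sq_nonneg (1 - ε'/4))
    linarith
  have hB1 : Tendsto (fun n => ENNReal.ofReal (rexp (-(2 * ε' * Real.log (p n)))))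
      atTop (𝓝 0) := by
    rw [← ENNReal.ofReal_zero]
    exact ENNReal.tendsto_ofReal
      (tendsto_exp_neg_zero (hL.const_mul_atTop (by positivity)))
  have hB2 : Tendsto (fun n => ENNReal.ofReal ((16 / cGauss)
      * rexp (-((1 - 2 * ρ * (1 - ε'/4) ^ 2) * Real.log (p n)
          - 2 * Real.sqrt (Real.log (p n)))))) atTop (𝓝 0) := by
    rw [← ENNReal.ofReal_zero]
    apply ENNReal.tendsto_ofReal
    have hinner := tendsto_exp_neg_zero ((tendsto_mul_sub_sqrt (b := 2) hcoef).comp hL)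
    have := hinner.const_mul (16 / cGauss)
    simpa using this
  have hB4 : Tendsto (fun n => ENNReal.ofReal (rexp (-(cGauss ^ 3 / 64
      * rexp (2 * (ε'/4) * Real.log (p n) - 6 * Real.sqrt (Real.log (p n)))))))
      atTop (𝓝 0) := by
    rw [← ENNReal.ofReal_zero]
    apply ENNReal.tendsto_ofReal
    have hinner1 : Tendsto (fun n => 2 * (ε'/4) * Real.log (p n)
        - 6 * Real.sqrt (Real.log (p n))) atTop atTop :=
      (tendsto_mul_sub_sqrt (b := 6) (by positivity)).comp hL
    have hinner2 : Tendsto (fun n => cGauss ^ 3 / 64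
        * rexp (2 * (ε'/4) * Real.log (p n) - 6 * Real.sqrt (Real.log (p n)))) atTop atTop :=
      Tendsto.const_mul_atTop (by have := cGauss_pos; positivity) (Real.tendsto_exp_atTop.comp hinner1)
    exact tendsto_exp_neg_zero hinner2
  have hBtend : Tendsto Bnd atTop (𝓝 0) := by
    rw [hBnd]
    have := hB1.add (hB2.add (hB2.add hB4))
    simpa using this
  refine tendsto_of_tendsto_of_tendsto_of_le_of_le' tendsto_const_nhds hBtend
    (Filter.Eventually.of_forall (fun n => zero_le)) ?_
  filter_upwards [hp.eventually_ge_atTop 2] with n hn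
  have hmaster := master hW ⟨hρ0, hρ2⟩ hε'0 hε'1 hn
  refine le_trans (measure_mono (fun x hx => ?_)) hmaster
  exact le_trans (min_le_left ε 1) hx

end GaussianField
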